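/- arXiv:2303.16713 — 2 statements merged into one kernel-verified Lean document; each statement's English description precedes it below -/
import Mathlib

section
/- Let $f\colon\mathbb{R}\to\mathbb{R}$ be the continuous $2$-periodic function with $f(x)=|x|$ for $x\in[-1,1]$, and set $d_n=\tfrac12-\tfrac{1}{4n^{2}}$. Then $\frac{Mf(d_n)-Mf(1/2)}{\tfrac12-d_n}\to\tfrac13$ as $n\to\infty$, where $M$ is the Hardy–Littlewood maximal operator. -/
open MeasureTheory Metric Set Filter

noncomputable def holderSemi {X : Type*} [MetricSpace X] (α : X → ℝ) (f : X → ℝ) : ℝ :=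
  ⨆ p : {p : X × X // p.1 ≠ p.2}, |f p.1.1 - f p.1.2| / dist p.1.1 p.1.2 ^ α p.1.1

noncomputable def holderNorm {X : Type*} [MetricSpace X] (α : X → ℝ) (f : X → ℝ) : ℝ :=
  (⨆ x, |f x|) + holderSemi α f

def MemVarHolder {X : Type*} [MetricSpace X] (α : X → ℝ) (f : X → ℝ) : Prop :=
  Continuous f ∧ BddAbove (Set.range fun x => |f x|) ∧
    BddAbove (Set.range fun p : {p : X × X // p.1 ≠ p.2} =>
      |f p.1.1 - f p.1.2| / dist p.1.1 p.1.2 ^ α p.1.1)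

noncomputable def maxFunR (f : ℝ → ℝ) (x : ℝ) : ℝ :=
  ⨆ r : {r : ℝ // 0 < r}, (1 / (2 * r.1)) * ∫ t in x - r.1..x + r.1, |f t|

/-!
The triangle wave satisfies `f (1 - t) = 1 - f t`, so its average over every interval centred
at `1/2` is exactly `1/2`. Centred at `1/2 - ε` instead, the interval `[1/2 - ε - r, 1/2 - ε + r]`
splits into a piece of length `2ε` at its left end and an interval centred at `1/2`; the former
integral is controlled by the affine majorant `f t ≤ 2/3 - t/3` (valid for `t ≤ 1/2`), giving
`Mf (1/2 - ε) ≤ 1/2 + ε/3`, while the radius `r = 3/2 - ε` shows `Mf (1/2 - ε) ≥ 1/2 + ε/3 - ε²`.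
-/

open Topology

section MaximalFunction

variable {f : ℝ → ℝ} {x C : ℝ}

theorem maxFunR_le (h : ∀ r, 0 < r → 1 / (2 * r) * ∫ t in x - r..x + r, |f t| ≤ C) :
    maxFunR f x ≤ C :=
  haveI : Nonempty {r : ℝ // 0 < r} := ⟨⟨1, one_pos⟩⟩
  ciSup_le fun r => h r.1 r.2

theorem le_maxFunR (h : ∀ r, 0 < r → 1 / (2 * r) * ∫ t in x - r..x + r, |f t| ≤ C)
    {r : ℝ} (hr : 0 < r) : 1 / (2 * r) * ∫ t in x - r..x + r, |f t| ≤ maxFunR f x :=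
  le_ciSup (f := fun r : {r : ℝ // 0 < r} => 1 / (2 * r.1) * ∫ t in x - r.1..x + r.1, |f t|)
    ⟨C, by rintro _ ⟨r, rfl⟩; exact h r.1 r.2⟩ ⟨r, hr⟩

end MaximalFunction

theorem integral_symm_of_map_sub_eq {f : ℝ → ℝ} {c k s : ℝ}
    (hf : IntervalIntegrable f volume (c / 2 - s) (c / 2 + s)) (h : ∀ t, f (c - t) = k - f t) :
    ∫ t in c / 2 - s..c / 2 + s, f t = k * s := by
  have hrefl := intervalIntegral.integral_comp_sub_left f c (a := c / 2 - s) (b := c / 2 + s)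
  rw [show c - (c / 2 + s) = c / 2 - s by ring, show c - (c / 2 - s) = c / 2 + s by ring] at hrefl
  simp only [h] at hrefl
  rw [intervalIntegral.integral_sub intervalIntegrable_const hf, intervalIntegral.integral_const,
    smul_eq_mul] at hrefl
  linarith

structure IsTriangleWave (f : ℝ → ℝ) : Prop where
  periodic : Function.Periodic f 2
  eqOn_abs : EqOn f abs (Icc (-1) 1)

namespace IsTriangleWave

variable {f : ℝ → ℝ} {ε : ℝ}

theorem mem_Icc (hw : IsTriangleWave f) (t : ℝ) : f t ∈ Icc 0 1 := by
  obtain ⟨y, ⟨hy₁, hy₂⟩, hy⟩ := hw.periodic.exists_mem_Ico two_pos t (-1)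
  rw [hy, hw.eqOn_abs ⟨hy₁, by linarith⟩]
  exact ⟨abs_nonneg y, abs_le.2 ⟨hy₁, by linarith⟩⟩

theorem one_sub (hw : IsTriangleWave f) (t : ℝ) : f (1 - t) = 1 - f t := by
  have hsum : Function.Periodic (fun t => f (1 - t) + f t) 2 := fun t => by
    dsimp only
    rw [show 1 - (t + 2) = 1 - t - 2 by ring, hw.periodic.sub_eq, hw.periodic]
  obtain ⟨y, ⟨hy₁, hy₂⟩, hy⟩ := hsum.exists_mem_Ico two_pos t (-1)
  suffices f (1 - y) + f y = 1 by linarith [show f (1 - t) + f t = f (1 - y) + f y from hy]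
  rw [hw.eqOn_abs ⟨hy₁, by linarith⟩]
  rcases le_total 0 y with hy₀ | hy₀
  · rw [hw.eqOn_abs ⟨by linarith, by linarith⟩, abs_of_nonneg (by linarith),
      abs_of_nonneg hy₀]
    ring
  · rw [← hw.periodic.sub_eq, hw.eqOn_abs ⟨by linarith, by linarith⟩, abs_of_nonpos (by linarith),
      abs_of_nonpos hy₀]
    ring

theorem le_affine (hw : IsTriangleWave f) {t : ℝ} (ht : t ≤ 1 / 2) : f t ≤ 2 / 3 - t / 3 := by
  rcases le_or_gt (-1) t with h₁ | h₁
  · rw [hw.eqOn_abs ⟨h₁, by linarith⟩]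
    rcases le_total 0 t with h | h
    · rw [abs_of_nonneg h]; linarith
    · rw [abs_of_nonpos h]; linarith
  rcases le_or_gt (-2) t with h₂ | h₂
  · rw [← hw.periodic, hw.eqOn_abs ⟨by linarith, by linarith⟩, abs_of_nonneg (by linarith)]
    linarith
  · linarith [(hw.mem_Icc t).2]

theorem abs_apply_eq_self (hw : IsTriangleWave f) (t : ℝ) : |f t| = f t :=
  abs_of_nonneg (hw.mem_Icc t).1

theorem integral_centered_half (hw : IsTriangleWave f) (hf : Continuous f) (s : ℝ) :
    ∫ t in 1 / 2 - s..1 / 2 + s, f t = s := by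
  simpa using integral_symm_of_map_sub_eq (c := 1) (k := 1) (hf.intervalIntegrable _ _) hw.one_sub

theorem integral_le_affine (hw : IsTriangleWave f) (hf : Continuous f) {a b : ℝ} (hab : a ≤ b)
    (hsum : a + b ≤ 1) (hlen : b - a ≤ 1 / 2) :
    ∫ t in a..b, f t ≤ (b - a) * (2 / 3 - (a + b) / 6) := by
  rcases le_or_gt b (1 / 2) with hb | hb
  · have haff : ∫ t in a..b, (2 / 3 - t / 3) = (b - a) * (2 / 3 - (a + b) / 6) := by
      simp [intervalIntegral.integral_sub, intervalIntegral.integral_div, integral_id]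
      ring
    rw [← haff]
    exact intervalIntegral.integral_mono_on hab (hf.intervalIntegrable _ _)
      (Continuous.intervalIntegrable (by fun_prop) _ _) fun t ht => hw.le_affine (ht.2.trans hb)
  · -- `f` exceeds the majorant just right of `1/2`, but there `f t = t` and `a + b ≤ 1` suffices.
    have hid : ∫ t in a..b, f t = ∫ t in a..b, t := by
      refine intervalIntegral.integral_congr fun t ht => ?_
      rw [uIcc_of_le hab] at ht
      rw [hw.eqOn_abs ⟨by linarith [ht.1], by linarith [ht.2]⟩, abs_of_nonneg (by linarith [ht.1])]
    rw [hid, integral_id]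
    nlinarith [mul_nonneg (sub_nonneg.2 hab) (by linarith : (0 : ℝ) ≤ 1 - (a + b))]

theorem integral_centered_half_sub_le (hw : IsTriangleWave f) (hf : Continuous f) (hε₀ : 0 ≤ ε)
    (hε : ε ≤ 1 / 4) {r : ℝ} (hr : 0 ≤ r) :
    ∫ t in 1 / 2 - ε - r..1 / 2 - ε + r, f t ≤ r + 2 * ε * r / 3 := by
  have hcentre : ∫ t in 1 / 2 - ε - r + 2 * ε..1 / 2 - ε + r, f t = r - ε := by
    rw [← hw.integral_centered_half hf (r - ε)]
    congr 1 <;> ring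
  have hend := hw.integral_le_affine hf (a := 1 / 2 - ε - r) (b := 1 / 2 - ε - r + 2 * ε)
    (by linarith) (by linarith) (by linarith)
  rw [← intervalIntegral.integral_add_adjacent_intervals (hf.intervalIntegrable _ _)
    (hf.intervalIntegrable _ _), hcentre]
  nlinarith

theorem integral_centered_half_sub_three_halves (hw : IsTriangleWave f) (hf : Continuous f)
    (hε₀ : 0 ≤ ε) (hε : ε ≤ 1 / 2) :
    ∫ t in 1 / 2 - ε - (3 / 2 - ε)..1 / 2 - ε + (3 / 2 - ε), f t = 3 / 2 - 2 * ε ^ 2 := by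
  have hend : ∫ t in -1..-1 + 2 * ε, f t = ∫ t in -1..-1 + 2 * ε, -t := by
    refine intervalIntegral.integral_congr fun t ht => ?_
    rw [uIcc_of_le (by linarith)] at ht
    rw [hw.eqOn_abs ⟨ht.1, by linarith [ht.2]⟩, abs_of_nonpos (by linarith [ht.2])]
  have hcentre : ∫ t in -1 + 2 * ε..2 - 2 * ε, f t = 3 / 2 - 2 * ε := by
    rw [← hw.integral_centered_half hf (3 / 2 - 2 * ε)]
    congr 1 <;> ring
  rw [show 1 / 2 - ε - (3 / 2 - ε) = -1 by ring, show 1 / 2 - ε + (3 / 2 - ε) = 2 - 2 * ε by ring,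
    ← intervalIntegral.integral_add_adjacent_intervals (b := -1 + 2 * ε) (hf.intervalIntegrable _ _)
    (hf.intervalIntegrable _ _), hend, hcentre, intervalIntegral.integral_neg, integral_id]
  ring

theorem average_centered_half_sub_le (hw : IsTriangleWave f) (hf : Continuous f) (hε₀ : 0 ≤ ε)
    (hε : ε ≤ 1 / 4) {r : ℝ} (hr : 0 < r) :
    1 / (2 * r) * ∫ t in 1 / 2 - ε - r..1 / 2 - ε + r, |f t| ≤ 1 / 2 + ε / 3 := by
  simp only [hw.abs_apply_eq_self]
  calc 1 / (2 * r) * ∫ t in 1 / 2 - ε - r..1 / 2 - ε + r, f t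
      ≤ 1 / (2 * r) * (r + 2 * ε * r / 3) := by
        gcongr
        exact hw.integral_centered_half_sub_le hf hε₀ hε hr.le
    _ = 1 / 2 + ε / 3 := by field_simp

theorem maxFunR_half_sub_le (hw : IsTriangleWave f) (hf : Continuous f) (hε₀ : 0 ≤ ε)
    (hε : ε ≤ 1 / 4) : maxFunR f (1 / 2 - ε) ≤ 1 / 2 + ε / 3 :=
  maxFunR_le fun _ hr => hw.average_centered_half_sub_le hf hε₀ hε hr

theorem le_maxFunR_half_sub (hw : IsTriangleWave f) (hf : Continuous f) (hε₀ : 0 ≤ ε)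
    (hε : ε ≤ 1 / 4) : 1 / 2 + ε / 3 - ε ^ 2 ≤ maxFunR f (1 / 2 - ε) := by
  refine le_trans ?_ (le_maxFunR (fun _ hr => hw.average_centered_half_sub_le hf hε₀ hε hr)
    (r := 3 / 2 - ε) (by linarith))
  simp only [hw.abs_apply_eq_self]
  rw [hw.integral_centered_half_sub_three_halves hf hε₀ (by linarith), one_div_mul_eq_div,
    le_div_iff₀ (by linarith)]
  nlinarith [sq_nonneg ε]

theorem maxFunR_half (hw : IsTriangleWave f) (hf : Continuous f) : maxFunR f (1 / 2) = 1 / 2 := by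
  have hle := hw.maxFunR_half_sub_le hf le_rfl (ε := 0) (by norm_num)
  have hge := hw.le_maxFunR_half_sub hf le_rfl (ε := 0) (by norm_num)
  simp only [sub_zero] at hle hge
  linarith

theorem tendsto_slope_maxFunR_half (hw : IsTriangleWave f) (hf : Continuous f) :
    Tendsto (fun ε => (maxFunR f (1 / 2 - ε) - maxFunR f (1 / 2)) / (1 / 2 - (1 / 2 - ε)))
      (𝓝[>] 0) (𝓝 (1 / 3)) := by
  have hsmall : ∀ᶠ ε in 𝓝[>] (0 : ℝ), ε ∈ Ioc 0 (1 / 4) := Ioc_mem_nhdsGT (by norm_num)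
  have hlow : Tendsto (fun ε : ℝ => 1 / 3 - ε) (𝓝[>] 0) (𝓝 (1 / 3)) := by
    simpa using (tendsto_const_nhds.sub tendsto_id : Tendsto (fun ε : ℝ => 1 / 3 - ε) (𝓝 0) _)
      |>.mono_left nhdsWithin_le_nhds
  refine tendsto_of_tendsto_of_tendsto_of_le_of_le' hlow tendsto_const_nhds ?_ ?_ <;>
    filter_upwards [hsmall] with ε ⟨hε₀, hε⟩ <;>
    rw [sub_sub_cancel, hw.maxFunR_half hf]
  · rw [le_div_iff₀ hε₀]
    nlinarith [hw.le_maxFunR_half_sub hf hε₀.le hε]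
  · rw [div_le_iff₀ hε₀]
    linarith [hw.maxFunR_half_sub_le hf hε₀.le hε]

end IsTriangleWave

/-- The difference quotient of `Mf` between `d_n = 1/2 - 1/(4n²)`
and `1/2` converges to `1/3`. -/
theorem maximal_function_difference_quotient_limit
    (f : ℝ → ℝ) (hf : Continuous f) (hper : ∀ t, f (t + 2) = f t)
    (hval : ∀ x ∈ Set.Icc (-1 : ℝ) 1, f x = |x|) :
    Tendsto (fun n : ℕ =>
        (maxFunR f (1 / 2 - 1 / (4 * (n : ℝ) ^ 2)) - maxFunR f (1 / 2)) /
          (1 / 2 - (1 / 2 - 1 / (4 * (n : ℝ) ^ 2))))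
      atTop (nhds (1 / 3)) := by
  have hw : IsTriangleWave f := ⟨hper, fun x hx => hval x hx⟩
  have hε : Tendsto (fun n : ℕ => 1 / (4 * (n : ℝ) ^ 2)) atTop (𝓝[>] 0) := by
    refine tendsto_nhdsWithin_iff.2 ⟨tendsto_const_nhds.div_atTop (a := (1 : ℝ)) ?_, ?_⟩
    · exact ((tendsto_pow_atTop two_ne_zero).comp tendsto_natCast_atTop_atTop).const_mul_atTop
        four_pos
    · filter_upwards [eventually_gt_atTop (0 : ℕ)] with n hn
      have : (0 : ℝ) < n := Nat.cast_pos.2 hn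
      exact mem_Ioi.2 (by positivity)
  exact (hw.tendsto_slope_maxFunR_half hf).comp hε
end

section
/- Let $f\colon\mathbb{R}\to\mathbb{R}$ be the continuous $2$-periodic function with $f(x)=|x|$ for $x\in[-1,1]$, and for $n\in\mathbb{N}$ set $f_n(x)=f(x)-\tfrac1n$ and $d_n=\tfrac12-\tfrac{1}{4n^{2}}$. Then for all sufficiently large $n$ and all $r\in(0,2]$, $\frac{1}{2r}\int_{d_n-r}^{d_n+r}|f_n(t)|\,dt\leq 1-\sqrt{-\tfrac{1}{n^{2}}+\tfrac{1}{n}+\tfrac14}$. -/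
open MeasureTheory Metric Set Filter

/-!
Write `c = 1/n`, `d = 1/2 - c²/4`, `s = √(1/4 + c - c²)` and `F x = ∫ t in 0..x, |f t - c|`.
As `|f - c|` is even and `2`-periodic, `F` is odd with `F (x + 2) = F x + F 2`, and on `[0, 1]`
it is the primitive of `|t - c|`. So the defect `F (d + r) - F (d - r) - 2 r (1 - s)` is a
piecewise quadratic function of `r`, with a new piece whenever `d ± r` crosses a kink of `|f - c|`.
On each of the nine pieces it is affine, convex, or a concave parabola with vertex `r = s` or
`r = 1 + s`; checking the ends of the pieces and the two vertices gives `defect ≤ 0`. The vertex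
`r = s`, where the defect is only of order `-c²/4`, is where the constant `s` comes from.
-/

theorem Function.Periodic.apply_neg_of_forall_mem_Ico {α : Type*} {g : ℝ → α} {T : ℝ}
    (hg : Function.Periodic g T) (hT : 0 < T) (h : ∀ x ∈ Ico (-(T / 2)) (T / 2), g (-x) = g x)
    (x : ℝ) : g (-x) = g x := by
  obtain ⟨n, hn, -⟩ := existsUnique_add_zsmul_mem_Ico hT x (-(T / 2))
  calc g (-x) = g (-(x + n • T)) := by rw [neg_add, ← sub_eq_add_neg, hg.sub_zsmul_eq]
    _ = g (x + n • T) := h (x + n • T) ⟨hn.1, by linarith [hn.2]⟩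
    _ = g x := hg.zsmul n x

theorem intervalIntegral.integral_zero_neg_of_even {E : Type*} [NormedAddCommGroup E]
    [NormedSpace ℝ E] {g : ℝ → E} (hg : ∀ x, g (-x) = g x) (x : ℝ) :
    ∫ t in 0..-x, g t = -∫ t in 0..x, g t := by
  rw [intervalIntegral.integral_symm, ← neg_zero, ← intervalIntegral.integral_comp_neg]
  simp only [hg, neg_zero]

theorem integral_zero_abs (y : ℝ) : ∫ t in 0..y, |t| = y * |y| / 2 := by
  rcases le_total 0 y with hy | hy
  · rw [intervalIntegral.integral_congr (g := fun t => t)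
      fun t ht => abs_of_nonneg (uIcc_of_le hy ▸ ht).1, integral_id, abs_of_nonneg hy]
    ring
  · rw [intervalIntegral.integral_congr (g := fun t => -t)
      fun t ht => abs_of_nonpos (uIcc_of_ge hy ▸ ht).2,
      intervalIntegral.integral_neg, integral_id, abs_of_nonpos hy]
    ring

noncomputable def absSubPrimitive (c x : ℝ) : ℝ := ((x - c) * |x - c| + c * |c|) / 2

theorem integral_zero_abs_sub (c x : ℝ) : ∫ t in 0..x, |t - c| = absSubPrimitive c x := by
  have hint (a b : ℝ) : IntervalIntegrable (fun t : ℝ => |t|) volume a b :=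
    continuous_abs.intervalIntegrable a b
  rw [intervalIntegral.integral_comp_sub_right (fun t => |t|),
    ← intervalIntegral.integral_interval_sub_left (hint 0 _) (hint 0 _), integral_zero_abs,
    integral_zero_abs, absSubPrimitive, zero_sub, abs_neg]
  ring

theorem absSubPrimitive_of_le {c x : ℝ} (hc : 0 ≤ c) (h : c ≤ x) :
    absSubPrimitive c x = ((x - c) ^ 2 + c ^ 2) / 2 := by
  rw [absSubPrimitive, abs_of_nonneg (sub_nonneg.2 h), abs_of_nonneg hc]; ring

theorem absSubPrimitive_of_ge {c x : ℝ} (hc : 0 ≤ c) (h : x ≤ c) :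
    absSubPrimitive c x = (c ^ 2 - (x - c) ^ 2) / 2 := by
  rw [absSubPrimitive, abs_of_nonpos (sub_nonpos.2 h), abs_of_nonneg hc]; ring

theorem half_le_and_mul_le_of_sq_eq {c s : ℝ} (hc0 : 0 ≤ c) (hc : c ≤ 1) (hs0 : 0 ≤ s)
    (hs : s ^ 2 = 1 / 4 + c - c ^ 2) : 1 / 2 ≤ s ∧ (1 + 2 * c) * s ≤ 1 / 2 + 2 * c := by
  constructor
  · nlinarith
  · nlinarith [sq_nonneg ((1 + 2 * c) * s - (1 / 2 + 2 * c))]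

/-- The properties of `x ↦ ∫ t in 0..x, |f t - c|`, for the triangle wave `f`, that the estimate
uses. -/
structure IsTrianglePrimitive (c : ℝ) (F : ℝ → ℝ) : Prop where
  eq_on_Icc : ∀ x ∈ Icc (0 : ℝ) 1, F x = absSubPrimitive c x
  odd : ∀ x, F (-x) = -F x
  add_two : ∀ x, F (x + 2) = F x + F 2

namespace IsTrianglePrimitive

variable {F : ℝ → ℝ} {c s r : ℝ}

theorem apply_two (hF : IsTrianglePrimitive c F) (hc0 : 0 ≤ c) (hc : c ≤ 1) :
    F 2 = (1 - c) ^ 2 + c ^ 2 := by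
  have h := hF.add_two (-1)
  rw [hF.odd, show (-1 : ℝ) + 2 = 1 by norm_num, hF.eq_on_Icc 1 ⟨zero_le_one, le_rfl⟩,
    absSubPrimitive_of_le hc0 hc] at h
  linarith

theorem apply_eq_apply_two_sub (hF : IsTrianglePrimitive c F) (x : ℝ) :
    F x = F 2 - F (2 - x) := by
  have h := hF.add_two (-(2 - x))
  rw [hF.odd, neg_sub, sub_add_cancel] at h
  linarith

set_option maxHeartbeats 1000000 in
theorem sub_le_of_right_le_one (hF : IsTrianglePrimitive c F) (hc0 : 0 < c) (hc : c ≤ 1 / 10)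
    (hs0 : 0 ≤ s) (hs : s ^ 2 = 1 / 4 + c - c ^ 2) (hr0 : 0 < r)
    (hR : 1 / 2 - c ^ 2 / 4 + r ≤ 1) :
    F (1 / 2 - c ^ 2 / 4 + r) - F (1 / 2 - c ^ 2 / 4 - r) ≤ 2 * r * (1 - s) := by
  obtain ⟨hs₁, hs₂⟩ := half_le_and_mul_le_of_sq_eq hc0.le (by linarith) hs0 hs
  have hcc0 : 0 ≤ c ^ 2 := sq_nonneg c
  have hcc : c ^ 2 ≤ c / 10 := by nlinarith
  rw [hF.eq_on_Icc _ ⟨by linarith, hR⟩, absSubPrimitive_of_le hc0.le (by linarith)]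
  rcases le_or_gt r (1 / 2 - c ^ 2 / 4 - c) with h₁ | h₁
  · rw [hF.eq_on_Icc _ ⟨by linarith, by linarith⟩, absSubPrimitive_of_le hc0.le (by linarith)]
    nlinarith [mul_nonneg hr0.le (by nlinarith : 0 ≤ 1 / 2 + c - s)]
  rcases le_or_gt r (1 / 2 - c ^ 2 / 4) with h₂ | h₂
  · rw [hF.eq_on_Icc _ ⟨by linarith, by linarith⟩, absSubPrimitive_of_ge hc0.le (by linarith)]
    nlinarith [mul_nonneg (by linarith : 0 ≤ r - (1 / 2 - c ^ 2 / 4 - c))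
      (by linarith : 0 ≤ 1 / 2 - c ^ 2 / 4 - r)]
  · rw [← neg_neg (1 / 2 - c ^ 2 / 4 - r), hF.odd, hF.eq_on_Icc _ ⟨by linarith, by linarith⟩,
      absSubPrimitive_of_ge hc0.le (by linarith)]
    nlinarith [mul_nonneg (by linarith : 0 ≤ 1 / 2 + c ^ 2 / 4 - r)
      (by nlinarith : 0 ≤ s - 1 / 2 - c ^ 2 / 4)]

set_option maxHeartbeats 1000000 in
theorem sub_le_of_right_le_two (hF : IsTrianglePrimitive c F) (hc0 : 0 < c) (hc : c ≤ 1 / 10)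
    (hs0 : 0 ≤ s) (hs : s ^ 2 = 1 / 4 + c - c ^ 2) (hR₁ : 1 < 1 / 2 - c ^ 2 / 4 + r)
    (hR₂ : 1 / 2 - c ^ 2 / 4 + r ≤ 2) :
    F (1 / 2 - c ^ 2 / 4 + r) - F (1 / 2 - c ^ 2 / 4 - r) ≤ 2 * r * (1 - s) := by
  obtain ⟨hs₁, hs₂⟩ := half_le_and_mul_le_of_sq_eq hc0.le (by linarith) hs0 hs
  have hcc0 : 0 ≤ c ^ 2 := sq_nonneg c
  have hcc : c ^ 2 ≤ c / 10 := by nlinarith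
  have hF2 := hF.apply_two hc0.le (by linarith)
  rw [hF.apply_eq_apply_two_sub, hF2, hF.eq_on_Icc _ ⟨by linarith, by linarith⟩]
  rcases le_or_gt r (1 / 2 - c ^ 2 / 4 + c) with h₁ | h₁
  -- The defect is `(1/2 - c)² - (1/2 - c + c²/4)² - (r - s)²`: this case determines `s`.
  · rw [← neg_neg (1 / 2 - c ^ 2 / 4 - r), hF.odd, hF.eq_on_Icc _ ⟨by linarith, by linarith⟩,
      absSubPrimitive_of_le hc0.le (by linarith), absSubPrimitive_of_ge hc0.le (by linarith)]
    nlinarith [sq_nonneg (r - s)]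
  rcases le_or_gt r (3 / 2 - c + c ^ 2 / 4) with h₂ | h₂
  -- The defect is affine and decreasing in `r`; `hE` says it is `≤ 0` at the left end.
  · rw [← neg_neg (1 / 2 - c ^ 2 / 4 - r), hF.odd, hF.eq_on_Icc _ ⟨by linarith, by linarith⟩,
      absSubPrimitive_of_le hc0.le (by linarith), absSubPrimitive_of_le hc0.le (by linarith)]
    have hK : 0 ≤ 1 + 2 * c - c ^ 2 / 2 - 2 * s := by nlinarith
    have hE : 3 / 2 * c ^ 2 ≤ (1 / 2 + c - c ^ 2 / 4) * (1 + 2 * c - c ^ 2 / 2 - 2 * s) := by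
      nlinarith [mul_nonneg hc0.le (sub_nonneg.2 hs₂)]
    nlinarith [mul_nonneg (by linarith : 0 ≤ r - (1 / 2 - c ^ 2 / 4 + c)) hK]
  rcases le_or_gt r (3 / 2 - c ^ 2 / 4) with h₃ | h₃
  · rw [← neg_neg (1 / 2 - c ^ 2 / 4 - r), hF.odd, hF.eq_on_Icc _ ⟨by linarith, by linarith⟩,
      absSubPrimitive_of_ge hc0.le (by linarith), absSubPrimitive_of_le hc0.le (by linarith)]
    nlinarith [mul_nonneg (by linarith : 0 ≤ r - (3 / 2 - c + c ^ 2 / 4))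
      (by linarith : 0 ≤ 3 / 2 - c ^ 2 / 4 - r)]
  -- The defect is affine and increasing in `r`; `hE` says it is `≤ 0` at the right end.
  · rw [eq_sub_of_add_eq (hF.add_two (1 / 2 - c ^ 2 / 4 - r)).symm, hF2,
      hF.eq_on_Icc _ ⟨by linarith, by linarith⟩,
      absSubPrimitive_of_ge hc0.le (by linarith), absSubPrimitive_of_le hc0.le (by linarith)]
    have hK : 0 ≤ s - 1 / 2 - c ^ 2 / 4 := by nlinarith
    have hE : (3 + c ^ 2 / 2) * (s - 1 / 2 - c ^ 2 / 4) ≤ 3 * c - 4 * c ^ 2 + c ^ 3 / 2 := by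
      nlinarith [mul_nonneg (by positivity : (0 : ℝ) ≤ 3 + c ^ 2 / 2) (sub_nonneg.2 hs₂)]
    linarith [mul_nonneg (by linarith : 0 ≤ 3 / 2 + c ^ 2 / 4 - r) hK]

set_option maxHeartbeats 1000000 in
theorem sub_le_of_two_lt_right (hF : IsTrianglePrimitive c F) (hc0 : 0 < c) (hc : c ≤ 1 / 10)
    (hs0 : 0 ≤ s) (hs : s ^ 2 = 1 / 4 + c - c ^ 2) (hR : 2 < 1 / 2 - c ^ 2 / 4 + r)
    (hr2 : r ≤ 2) :
    F (1 / 2 - c ^ 2 / 4 + r) - F (1 / 2 - c ^ 2 / 4 - r) ≤ 2 * r * (1 - s) := by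
  obtain ⟨hs₁, hs₂⟩ := half_le_and_mul_le_of_sq_eq hc0.le (by linarith) hs0 hs
  have hcc0 : 0 ≤ c ^ 2 := sq_nonneg c
  have hcc : c ^ 2 ≤ c / 10 := by nlinarith
  have hF₁ : F (1 / 2 - c ^ 2 / 4 + r) = F 2 + absSubPrimitive c (r - 3 / 2 - c ^ 2 / 4) := by
    rw [← hF.eq_on_Icc _ ⟨by linarith, by linarith⟩, add_comm (F 2), ← hF.add_two]
    congr 1; ring
  have hF₂ : F (1 / 2 - c ^ 2 / 4 - r) = absSubPrimitive c (5 / 2 - c ^ 2 / 4 - r) - F 2 := by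
    rw [← hF.eq_on_Icc _ ⟨by linarith, by linarith⟩,
      show 5 / 2 - c ^ 2 / 4 - r = 1 / 2 - c ^ 2 / 4 - r + 2 by ring, hF.add_two,
      add_sub_cancel_right]
  rw [hF₁, hF₂, hF.apply_two hc0.le (by linarith),
    absSubPrimitive_of_le (x := 5 / 2 - c ^ 2 / 4 - r) hc0.le (by linarith)]
  rcases le_or_gt r (3 / 2 + c + c ^ 2 / 4) with h₁ | h₁
  · rw [absSubPrimitive_of_ge hc0.le (by linarith)]
    nlinarith [sq_nonneg (r - 1 - s)]
  · rw [absSubPrimitive_of_le hc0.le (by linarith)]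
    nlinarith [mul_nonneg (by linarith : 0 ≤ r - (3 / 2 + c + c ^ 2 / 4))
      (by nlinarith : 0 ≤ 1 / 2 + c + c ^ 2 / 4 - s)]

theorem sub_le (hF : IsTrianglePrimitive c F) (hc0 : 0 < c) (hc : c ≤ 1 / 10) (hs0 : 0 ≤ s)
    (hs : s ^ 2 = 1 / 4 + c - c ^ 2) (hr0 : 0 < r) (hr2 : r ≤ 2) :
    F (1 / 2 - c ^ 2 / 4 + r) - F (1 / 2 - c ^ 2 / 4 - r) ≤ 2 * r * (1 - s) := by
  rcases le_or_gt (1 / 2 - c ^ 2 / 4 + r) 1 with h₁ | h₁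
  · exact hF.sub_le_of_right_le_one hc0 hc hs0 hs hr0 h₁
  rcases le_or_gt (1 / 2 - c ^ 2 / 4 + r) 2 with h₂ | h₂
  · exact hF.sub_le_of_right_le_two hc0 hc hs0 hs h₁ h₂
  · exact hF.sub_le_of_two_lt_right hc0 hc hs0 hs h₂ hr2

end IsTrianglePrimitive

theorem isTrianglePrimitive_integral {f : ℝ → ℝ} (hf : Continuous f)
    (hper : ∀ t, f (t + 2) = f t) (hval : ∀ x ∈ Icc (-1 : ℝ) 1, f x = |x|) (c : ℝ) :
    IsTrianglePrimitive c fun x => ∫ t in 0..x, |f t - c| where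
  eq_on_Icc x hx := by
    rw [← integral_zero_abs_sub]
    refine intervalIntegral.integral_congr fun t ht => ?_
    rw [uIcc_of_le hx.1] at ht
    rw [hval t ⟨by linarith [ht.1], by linarith [ht.2, hx.2]⟩, abs_of_nonneg ht.1]
  odd := intervalIntegral.integral_zero_neg_of_even fun x => by
    rw [Function.Periodic.apply_neg_of_forall_mem_Ico (g := f) hper two_pos fun y hy => ?_]
    have hy' : y ∈ Icc (-1 : ℝ) 1 := by norm_num at hy; exact ⟨hy.1, hy.2.le⟩
    rw [hval y hy', hval (-y) ⟨by linarith [hy'.2], by linarith [hy'.1]⟩, abs_neg]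
  add_two x := by
    have hper' : Function.Periodic (fun t => |f t - c|) 2 := fun t => by simp only [hper]
    simpa only [zero_add] using hper'.intervalIntegral_add_eq_add 0 x
      fun a b => (hf.sub continuous_const).abs.intervalIntegrable a b

/-- For large `n`, all averages of `|f_n|` over intervals centred at
`d_n = 1/2 - 1/(4n²)` with radius `r ∈ (0, 2]` are bounded by
`1 - √(-1/n² + 1/n + 1/4)`, where `f_n = f - 1/n` and `f` is the `2`-periodic
extension of `|x|`. -/
theorem averages_at_dn_bounded
    (f : ℝ → ℝ) (hf : Continuous f) (hper : ∀ t, f (t + 2) = f t)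
    (hval : ∀ x ∈ Set.Icc (-1 : ℝ) 1, f x = |x|) :
    ∀ᶠ n : ℕ in atTop, ∀ r ∈ Set.Ioc (0 : ℝ) 2,
      (1 / (2 * r)) *
          ∫ t in (1 / 2 - 1 / (4 * (n : ℝ) ^ 2) - r)..(1 / 2 - 1 / (4 * (n : ℝ) ^ 2) + r),
            |f t - 1 / n| ≤
        1 - Real.sqrt (-(1 / (n : ℝ) ^ 2) + 1 / n + 1 / 4) := by
  filter_upwards [eventually_ge_atTop 10] with n hn r ⟨hr0, hr2⟩
  have hn' : (10 : ℝ) ≤ n := by exact_mod_cast hn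
  set c : ℝ := 1 / n with hc
  have hc0 : 0 < c := by positivity
  have hc1 : c ≤ 1 / 10 := by rw [hc, div_le_div_iff₀ (by positivity) (by norm_num)]; linarith
  rw [show (1 : ℝ) / (4 * n ^ 2) = c ^ 2 / 4 by rw [hc]; ring,
    show -(1 / (n : ℝ) ^ 2) + c + 1 / 4 = 1 / 4 + c - c ^ 2 by rw [hc]; ring,
    one_div_mul_eq_div, div_le_iff₀ (by positivity)]
  have hint (a b : ℝ) : IntervalIntegrable (fun t => |f t - c|) volume a b :=
    (hf.sub continuous_const).abs.intervalIntegrable a b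
  rw [← intervalIntegral.integral_interval_sub_left (hint 0 _) (hint 0 _)]
  exact ((isTrianglePrimitive_integral hf hper hval c).sub_le hc0 hc1 (Real.sqrt_nonneg _)
    (Real.sq_sqrt (by nlinarith)) hr0 hr2).trans_eq (mul_comm _ _)
end
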